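/- arXiv:2212.01788 — 3 statements merged into one kernel-verified Lean document; each statement's English description precedes it below -/
import Mathlib

section
/- Let n ≥ 1 and let A = (a_{ij}) be a real n×n matrix with all entries non-negative satisfying the cyclic non-increasing condition and Ae > 0 (all row sums strictly positive). Suppose in addition there is an index k ∈ {1,…,n} such that a_{rr} > a_{rk} for every row index r ≠ k. Then A is a P-matrix. -/
open Matrix BigOperators

/-- The cyclic non-increasing condition: each row of `A` weakly decreases
cyclically starting from the diagonal, i.e. `a_{i[j-1]} ≥ a_{ij}` for all
`j ≠ i` (indices in `Fin n`, arithmetic mod `n`). -/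
def CyclicNonIncr {n : ℕ} [NeZero n] (A : Matrix (Fin n) (Fin n) ℝ) : Prop :=
  ∀ i j : Fin n, j ≠ i → A i (j - 1) ≥ A i j

/-- The directed graph `𝒢(A)` has an edge from `i` to `j` iff `a_{i[j-1]} > a_{ij}`. -/
def GraphEdge {n : ℕ} [NeZero n] (A : Matrix (Fin n) (Fin n) ℝ) (i j : Fin n) : Prop :=
  A i (j - 1) > A i j

/-- `i` and `j` are strongly connected in `𝒢(A)`: there are directed paths
(possibly of length 0) from `i` to `j` and from `j` to `i`. -/
def Conn {n : ℕ} [NeZero n] (A : Matrix (Fin n) (Fin n) ℝ) (i j : Fin n) : Prop :=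
  Relation.ReflTransGen (GraphEdge A) i j ∧ Relation.ReflTransGen (GraphEdge A) j i

/-- `C` is a strongly connected component of `𝒢(A)`: an equivalence class of
the strong-connectivity relation. -/
def IsSCC {n : ℕ} [NeZero n] (A : Matrix (Fin n) (Fin n) ℝ) (C : Set (Fin n)) : Prop :=
  ∃ i, C = {j | Conn A i j}

/-- `C` is a closed SCC of `𝒢(A)`: an SCC with no edge leaving it. -/
def IsClosedSCC {n : ℕ} [NeZero n] (A : Matrix (Fin n) (Fin n) ℝ) (C : Set (Fin n)) : Prop :=
  IsSCC A C ∧ ∀ i ∈ C, ∀ j, GraphEdge A i j → j ∈ C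

/-- `C` is an open SCC of `𝒢(A)`: an SCC with some edge leaving it. -/
def IsOpenSCC {n : ℕ} [NeZero n] (A : Matrix (Fin n) (Fin n) ℝ) (C : Set (Fin n)) : Prop :=
  IsSCC A C ∧ ¬ (∀ i ∈ C, ∀ j, GraphEdge A i j → j ∈ C)

/-- A square real matrix is a `P`-matrix if all its principal minors
(over nonempty index subsets) are strictly positive. -/
def IsPMatrix {n : ℕ} [NeZero n] (A : Matrix (Fin n) (Fin n) ℝ) : Prop :=
  ∀ S : Finset (Fin n), S.Nonempty →
    0 < (A.submatrix (fun i : {a // a ∈ S} => (i : Fin n))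
          (fun j : {a // a ∈ S} => (j : Fin n))).det

/-!
Replacing every column of `B` except a pivot column `k` by its difference with the cyclically
preceding column does not change `det B`; it turns `B` into the matrix `L` of cyclic row
differences with column `k` restored. `L` is a Z-matrix with zero row sums, so the columns of its
adjugate are constant and `det B = ∑ i, B i k * adj L i i`. Each `adj L i i` is the determinant of
a weakly diagonally dominant Z-matrix, hence nonnegative, and `adj L k k > 0` because every row
`s ≠ k` of `L` has a negative entry in a column cyclically closer to `k` (weak chained diagonal
dominance).
Principal submatrices inherit the cyclic condition together with a pivot.
-/

open Finset

namespace Matrix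

variable {ι : Type*} [Fintype ι] [DecidableEq ι]

theorem sum_mul_abs_nonpos_of_mulVec_eq_zero {N : Matrix ι ι ℝ} (hZ : ∀ i j, i ≠ j → N i j ≤ 0)
    {x : ι → ℝ} (hx : N *ᵥ x = 0) (i : ι) : ∑ j, N i j * |x j| ≤ 0 := by
  have hrow : N i i * x i = -∑ j ∈ univ.erase i, N i j * x j := by
    have := congrFun hx i
    simp only [mulVec, dotProduct, Pi.zero_apply, ← add_sum_erase _ _ (mem_univ i)] at this
    linarith
  have hoff : ∑ j ∈ univ.erase i, |N i j * x j| = -∑ j ∈ univ.erase i, N i j * |x j| := by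
    rw [← sum_neg_distrib]
    refine sum_congr rfl fun j hj => ?_
    rw [abs_mul, abs_of_nonpos (hZ i j (ne_of_mem_erase hj).symm)]
    ring
  have hdiag : N i i * |x i| ≤ ∑ j ∈ univ.erase i, |N i j * x j| :=
    calc N i i * |x i| ≤ |N i i * x i| := by
          rw [abs_mul]; exact mul_le_mul_of_nonneg_right (le_abs_self _) (abs_nonneg _)
      _ ≤ ∑ j ∈ univ.erase i, |N i j * x j| := by
          rw [hrow, abs_neg]; exact abs_sum_le_sum_abs _ _
  rw [← add_sum_erase _ _ (mem_univ i)]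
  linarith

theorem det_ne_zero_of_chained (N : Matrix ι ι ℝ) (hZ : ∀ i j, i ≠ j → N i j ≤ 0)
    (hrow : ∀ i, 0 ≤ ∑ j, N i j) (φ : ι → ℕ)
    (hchain : ∀ i, 0 < ∑ j, N i j ∨ ∃ j, N i j < 0 ∧ φ j < φ i) : N.det ≠ 0 := by
  intro hdet
  obtain ⟨x, hx0, hx⟩ := exists_mulVec_eq_zero_iff.mpr hdet
  obtain ⟨i₁, hi₁⟩ := Function.ne_iff.mp hx0
  obtain ⟨i₀, -, hmax⟩ := univ.exists_max_image (fun i => |x i|) ⟨i₁, mem_univ _⟩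
  set c := |x i₀|
  have hc : 0 < c := (abs_pos.2 hi₁).trans_le (hmax i₁ (mem_univ _))
  -- Among the coordinates of maximal modulus, take one that is lowest in the chain.
  obtain ⟨i, hi, hmin⟩ := {i | |x i| = c}.toFinset.exists_min_image φ ⟨i₀, by simp [c]⟩
  have hxi : |x i| = c := by simpa using hi
  have hle := sum_mul_abs_nonpos_of_mulVec_eq_zero hZ hx i
  have hterm : ∀ j, 0 ≤ -N i j * (c - |x j|) := by
    intro j
    rcases eq_or_ne i j with rfl | hij
    · simp [hxi]
    · exact mul_nonneg (neg_nonneg.2 (hZ i j hij)) (sub_nonneg.2 (hmax j (mem_univ _)))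
  have hsplit : ∑ j, N i j * |x j| = c * ∑ j, N i j + ∑ j, -N i j * (c - |x j|) := by
    rw [mul_sum, ← sum_add_distrib]
    exact sum_congr rfl fun j _ => by ring
  rcases hchain i with hpos | ⟨j, hj, hφ⟩
  · nlinarith [sum_nonneg fun j (_ : j ∈ univ) => hterm j]
  · have hxj : |x j| < c := (hmax j (mem_univ _)).lt_of_ne fun h =>
      (hmin j (by simpa using h)).not_gt hφ
    have hj_pos : 0 < -N i j * (c - |x j|) := mul_pos (neg_pos.2 hj) (sub_pos.2 hxj)
    have := single_le_sum (fun j (_ : j ∈ univ) => hterm j) (mem_univ j)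
    nlinarith [hrow i]

theorem det_pos_of_chained (N : Matrix ι ι ℝ) (hZ : ∀ i j, i ≠ j → N i j ≤ 0)
    (hrow : ∀ i, 0 ≤ ∑ j, N i j) (φ : ι → ℕ)
    (hchain : ∀ i, 0 < ∑ j, N i j ∨ ∃ j, N i j < 0 ∧ φ j < φ i) : 0 < N.det := by
  set M : ℝ → Matrix ι ι ℝ := fun t => (1 - t) • 1 + t • N
  have hrowM : ∀ t i, ∑ j, M t i j = 1 - t + t * ∑ j, N i j := by
    intro t i
    simp [M, sum_add_distrib, mul_sum, one_apply]
  -- Every matrix on the segment from `1` to `N` is again chained, hence nonsingular.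
  have hM : ∀ t ∈ Set.Icc (0 : ℝ) 1, (M t).det ≠ 0 := by
    rintro t ⟨h0, h1⟩
    rcases h1.lt_or_eq with h1 | rfl
    · refine det_ne_zero_of_chained _ (fun i j hij => ?_) (fun i => ?_) φ (fun i => Or.inl ?_)
      · simpa [M, one_apply_ne hij] using mul_nonpos_of_nonneg_of_nonpos h0 (hZ i j hij)
      all_goals rw [hrowM]; nlinarith [hrow i]
    · simpa [M] using det_ne_zero_of_chained N hZ hrow φ hchain
  have hcont : Continuous fun t => (M t).det := by
    refine Continuous.matrix_det (continuous_matrix fun i j => ?_)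
    simp only [M, add_apply, smul_apply, smul_eq_mul]
    fun_prop
  by_contra hneg
  obtain ⟨t, ht, ht0⟩ : (0 : ℝ) ∈ (fun t => (M t).det) '' Set.Icc 0 1 :=
    intermediate_value_Icc' zero_le_one hcont.continuousOn
      ⟨by simpa [M] using not_lt.1 hneg, by simp [M]⟩
  exact hM t ht ht0

theorem det_nonneg_of_sum_row_nonneg (N : Matrix ι ι ℝ) (hZ : ∀ i j, i ≠ j → N i j ≤ 0)
    (hrow : ∀ i, 0 ≤ ∑ j, N i j) : 0 ≤ N.det := by
  have hpos : ∀ ε ∈ Set.Ioi (0 : ℝ), 0 ≤ (N + ε • 1).det := by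
    intro ε hε
    refine (det_pos_of_chained _ (fun i j hij => ?_) (fun i => ?_) 0 (fun i => Or.inl ?_)).le
    · simpa [one_apply_ne hij] using hZ i j hij
    all_goals
      simp only [add_apply, smul_apply, smul_eq_mul, sum_add_distrib, ← mul_sum, one_apply]
      simp only [sum_ite_eq, mem_univ, if_true, mul_one]
      linarith [hrow i, Set.mem_Ioi.1 hε]
  have hcont : Continuous fun ε : ℝ => (N + ε • 1).det := by
    refine Continuous.matrix_det (continuous_matrix fun i j => ?_)
    simp only [add_apply, smul_apply, smul_eq_mul]
    fun_prop
  simpa using (isClosed_le continuous_const hcont).closure_subset_iff.2 hpos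
    (by simp : (0 : ℝ) ∈ closure (Set.Ioi 0))

theorem adjugate_apply_eq_of_sum_row_eq_zero {R : Type*} [CommRing R] [IsDomain R]
    {L : Matrix ι ι R} (hL : ∀ i, ∑ j, L i j = 0) (i j : ι) :
    L.adjugate i j = L.adjugate j j := by
  -- Replacing row `j` by `eᵢ - eⱼ` keeps every row sum zero, so the result is singular.
  have hsing : (L.updateRow j (Pi.single i 1 - Pi.single j 1)).det = 0 := by
    refine exists_mulVec_eq_zero_iff.1
      ⟨fun _ => 1, Function.ne_iff.2 ⟨j, one_ne_zero⟩, funext fun r => ?_⟩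
    rcases eq_or_ne r j with rfl | hr
    · simp [mulVec, dotProduct, sum_sub_distrib]
    · simp [mulVec, dotProduct, updateRow_ne hr, hL r]
  have hsplit : (Pi.single i 1 : ι → R) = (Pi.single i 1 - Pi.single j 1) + Pi.single j 1 :=
    (sub_add_cancel _ _).symm
  rw [adjugate_apply, adjugate_apply, hsplit, det_updateRow_add, hsing, zero_add]

theorem det_updateCol_eq_sum_of_sum_row_eq_zero {R : Type*} [CommRing R] [IsDomain R]
    {L : Matrix ι ι R} (hL : ∀ i, ∑ j, L i j = 0) (k : ι) (b : ι → R) :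
    (L.updateCol k b).det = ∑ i, b i * L.adjugate i i := by
  rw [← cramer_apply, cramer_eq_adjugate_mulVec]
  simp only [mulVec, dotProduct, adjugate_apply_eq_of_sum_row_eq_zero hL k, mul_comm]

variable {L : Matrix ι ι ℝ}

theorem adjugate_apply_self_nonneg (hZ : ∀ i j, i ≠ j → L i j ≤ 0) (hL : ∀ i, ∑ j, L i j = 0)
    (k : ι) : 0 ≤ L.adjugate k k := by
  rw [adjugate_apply]
  refine det_nonneg_of_sum_row_nonneg _ (fun i j hij => ?_) (fun i => ?_)
  · rcases eq_or_ne i k with rfl | hi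
    · simp [hij.symm]
    · simpa [updateRow_ne hi] using hZ i j hij
  · rcases eq_or_ne i k with rfl | hi
    · simp
    · simp [updateRow_ne hi, hL i]

theorem adjugate_apply_self_pos (hZ : ∀ i j, i ≠ j → L i j ≤ 0) (hL : ∀ i, ∑ j, L i j = 0)
    (k : ι) (φ : ι → ℕ) (hchain : ∀ i ≠ k, ∃ j, L i j < 0 ∧ φ j < φ i) :
    0 < L.adjugate k k := by
  rw [adjugate_apply]
  refine det_pos_of_chained _ (fun i j hij => ?_) (fun i => ?_) φ (fun i => ?_)
  · rcases eq_or_ne i k with rfl | hi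
    · simp [hij.symm]
    · simpa [updateRow_ne hi] using hZ i j hij
  · rcases eq_or_ne i k with rfl | hi
    · simp
    · simp [updateRow_ne hi, hL i]
  · rcases eq_or_ne i k with rfl | hi
    · simp
    · simpa [updateRow_ne hi] using Or.inr (hchain i hi)

end Matrix

namespace Fin

variable {n : ℕ}

theorem val_sub_eq_ite (a b : Fin n) :
    (a - b : Fin n).val = if b ≤ a then a.val - b.val else n + a.val - b.val := by
  split_ifs with h
  · exact coe_sub_iff_le.2 h
  · exact coe_sub_iff_lt.2 (not_le.1 h)

theorem sub_le_sub_right_iff (p x y : Fin n) :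
    x - p ≤ y - p ↔ x ≤ y ∧ (p ≤ x ∨ y < p) ∨ y < p ∧ p ≤ x := by
  have := x.isLt; have := y.isLt
  simp only [le_def, lt_def, val_sub_eq_ite]
  split_ifs <;> omega

theorem sub_le_sub_of_sub_lt_sub {p x y : Fin n} (h : x - p < y - p) : p - y ≤ x - y := by
  have := x.isLt; have := y.isLt; have := p.isLt
  simp only [le_def, lt_def, val_sub_eq_ite] at h ⊢
  split_ifs at h ⊢ <;> omega

end Fin

theorem StrictMono.fin_sub_le_sub_iff {m n : ℕ} {f : Fin m → Fin n} (hf : StrictMono f)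
    (p x y : Fin m) : f x - f p ≤ f y - f p ↔ x - p ≤ y - p := by
  simp only [Fin.sub_le_sub_right_iff, hf.le_iff_le, hf.lt_iff_lt]

section CyclicNonIncr

variable {n : ℕ} [NeZero n] {A : Matrix (Fin n) (Fin n) ℝ}

theorem cyclicNonIncr_iff : CyclicNonIncr A ↔ ∀ i j j', j - i ≤ j' - i → A i j' ≤ A i j := by
  obtain ⟨r, rfl⟩ := Nat.exists_eq_succ_of_ne_zero (NeZero.ne n)
  constructor
  · intro hA i j j' h
    have hanti : Antitone fun d => A i (i + d) := Fin.antitone_iff_succ_le.2 fun d => by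
      have hpred : i + d.succ - 1 = i + d.castSucc := by
        rw [← Fin.coeSucc_eq_succ, ← add_assoc, add_sub_cancel_right]
      simpa [hpred] using hA i (i + d.succ) (by simp)
    simpa using hanti h
  · intro h i j hij
    refine h i (j - 1) j ?_
    have hji : j - i ≠ 0 := sub_ne_zero.2 hij
    rw [sub_right_comm, Fin.le_def, Fin.coe_sub_one, if_neg hji]
    omega

theorem CyclicNonIncr.le_diag (hA : CyclicNonIncr A) (i j : Fin n) : A i j ≤ A i i :=
  cyclicNonIncr_iff.1 hA i i j (by simp)

theorem CyclicNonIncr.submatrix {m : ℕ} [NeZero m] (hA : CyclicNonIncr A) {f : Fin m → Fin n}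
    (hf : StrictMono f) : CyclicNonIncr (A.submatrix f f) :=
  cyclicNonIncr_iff.2 fun i j j' h =>
    cyclicNonIncr_iff.1 hA (f i) (f j) (f j') ((hf.fin_sub_le_sub_iff i j j').2 h)

theorem CyclicNonIncr.exists_submatrix_pivot {m : ℕ} [NeZero m] (hA : CyclicNonIncr A)
    {k : Fin n} (hk : ∀ r ≠ k, A r k < A r r) {f : Fin m → Fin n} (hf : StrictMono f) :
    ∃ k', ∀ t ≠ k', A (f t) (f k') < A (f t) (f t) := by
  -- `f k'` is the first point of the range of `f` at or after `k` in the cyclic order.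
  obtain ⟨k', -, hmin⟩ := univ.exists_min_image (fun t => f t - k) univ_nonempty
  refine ⟨k', fun t ht => ?_⟩
  have hlt : f k' - k < f t - k :=
    (hmin t (mem_univ t)).lt_of_ne fun h => ht (hf.injective (sub_left_inj.1 h)).symm
  have htk : f t ≠ k := by
    rintro h
    rw [h, sub_self] at hlt
    exact Fin.not_lt_zero _ hlt
  calc A (f t) (f k') ≤ A (f t) k :=
        cyclicNonIncr_iff.1 hA _ _ _ (Fin.sub_le_sub_of_sub_lt_sub hlt)
    _ < A (f t) (f t) := hk _ htk

end CyclicNonIncr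

section CyclicDiff

variable {n : ℕ} [NeZero n]

def cyclicDiff {R : Type*} [Ring R] (B : Matrix (Fin n) (Fin n) R) : Matrix (Fin n) (Fin n) R :=
  of fun i j => B i j - B i (j - 1)

theorem sum_cyclicDiff_row {R : Type*} [CommRing R] (B : Matrix (Fin n) (Fin n) R) (i : Fin n) :
    ∑ j, cyclicDiff B i j = 0 := by
  simp only [cyclicDiff, of_apply, sum_sub_distrib, sub_eq_zero]
  exact (Equiv.sum_comp (Equiv.subRight 1) (B i)).symm

def cyclicDiffOp {R : Type*} [Ring R] (k : Fin n) : Matrix (Fin n) (Fin n) R :=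
  of fun j l => if l = k then (if j = k then 1 else 0)
    else (if j = l then 1 else 0) - if j = l - 1 then 1 else 0

theorem mul_cyclicDiffOp {R : Type*} [Ring R] (B : Matrix (Fin n) (Fin n) R) (k : Fin n) :
    B * cyclicDiffOp k = (cyclicDiff B).updateCol k fun i => B i k := by
  ext i l
  by_cases hl : l = k
  · simp [cyclicDiffOp, mul_apply, hl]
  · simp [cyclicDiffOp, mul_apply, hl, cyclicDiff, mul_sub, sum_sub_distrib]

theorem det_cyclicDiffOp {R : Type*} [CommRing R] (k : Fin n) :
    (cyclicDiffOp k : Matrix (Fin n) (Fin n) R).det = 1 := by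
  obtain ⟨r, rfl⟩ := Nat.exists_eq_succ_of_ne_zero (NeZero.ne n)
  -- After rotating the indices so that `k` becomes `0`, the matrix is unipotent upper triangular.
  have hrot : ∀ j l, (cyclicDiffOp k : Matrix _ _ R).submatrix (Equiv.addRight k)
      (Equiv.addRight k) j l = if l = 0 then (if j = 0 then 1 else 0)
        else (if j = l then 1 else 0) - if j = l - 1 then 1 else 0 := by
    intro j l
    simp [cyclicDiffOp, add_sub_right_comm _ k]
  have hpred : ∀ l : Fin (r + 1), l ≠ 0 → (l - 1).val = l.val - 1 := fun l hl => by
    rw [Fin.coe_sub_one, if_neg hl]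
  rw [← det_submatrix_equiv_self (Equiv.addRight k), det_of_isUpperTriangular]
  · refine prod_eq_one fun j _ => ?_
    rw [hrot]
    by_cases hj : j = 0
    · simp [hj]
    · have : j ≠ j - 1 := fun h => by
        have := congrArg Fin.val h
        rw [hpred j hj] at this
        rw [Fin.ext_iff, Fin.val_zero] at hj
        omega
      simp [hj, this]
  · intro j l hlj
    rw [id, id] at hlj
    rw [hrot]
    by_cases hl : l = 0
    · simp [hl, (hl ▸ hlj).ne']
    · have : j ≠ l - 1 := fun h => by
        have := hpred l hl
        rw [← h] at this
        rw [Fin.lt_def] at hlj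
        omega
      simp [hl, hlj.ne', this]

theorem det_eq_det_updateCol_cyclicDiff {R : Type*} [CommRing R] (B : Matrix (Fin n) (Fin n) R)
    (k : Fin n) : B.det = ((cyclicDiff B).updateCol k fun i => B i k).det := by
  rw [← mul_cyclicDiffOp, det_mul, det_cyclicDiffOp, mul_one]

open Fin.NatCast in
theorem exists_cyclicDiff_neg {B : Matrix (Fin n) (Fin n) ℝ} {v k : Fin n} (h : B v k < B v v) :
    ∃ w, cyclicDiff B v w < 0 ∧ (k - w).val < (k - v).val := by
  set D := (k - v).val
  set g : ℕ → ℝ := fun d => B v (v + (d : Fin n))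
  obtain ⟨d, hdD, hd⟩ : ∃ d < D, g (d + 1) < g d := by
    by_contra! hstep
    have hmono : MonotoneOn g (Set.Iic D) :=
      monotoneOn_of_le_succ Set.ordConnected_Iic fun d _ _ hd => by
        simpa using hstep d (Order.succ_le_iff.1 hd)
    have := hmono (Set.mem_Iic.2 (Nat.zero_le D)) (Set.mem_Iic.2 le_rfl) (Nat.zero_le D)
    simp [g, D] at this
    linarith
  have hdn : d + 1 < n := lt_of_le_of_lt hdD (k - v).isLt
  have hcast : ((d + 1 : ℕ) : Fin n).val = d + 1 := by
    rw [Fin.val_natCast, Nat.mod_eq_of_lt hdn]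
  refine ⟨v + ((d + 1 : ℕ) : Fin n), ?_, ?_⟩
  · have : v + ((d + 1 : ℕ) : Fin n) - 1 = v + (d : Fin n) := by
      rw [Nat.cast_succ, ← add_assoc, add_sub_cancel_right]
    simp only [cyclicDiff, of_apply, this, sub_neg]
    exact hd
  · rw [← sub_sub, Fin.sub_val_of_le (by rw [Fin.le_def, hcast]; omega), hcast]
    omega

end CyclicDiff

theorem CyclicNonIncr.det_pos {n : ℕ} [NeZero n] {B : Matrix (Fin n) (Fin n) ℝ}
    (hB : CyclicNonIncr B) {k : Fin n} (hcol : ∀ i, 0 ≤ B i k) (hkk : 0 < B k k)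
    (hk : ∀ s ≠ k, B s k < B s s) : 0 < B.det := by
  set L := cyclicDiff B
  have hZ : ∀ i j, i ≠ j → L i j ≤ 0 := fun i j hij => sub_nonpos.2 (hB i j hij.symm)
  have hL := sum_cyclicDiff_row B
  have hμk : 0 < L.adjugate k k := adjugate_apply_self_pos hZ hL k (fun j => (k - j).val)
    fun s hs => exists_cyclicDiff_neg (hk s hs)
  rw [det_eq_det_updateCol_cyclicDiff B k, det_updateCol_eq_sum_of_sum_row_eq_zero hL]
  calc 0 < B k k * L.adjugate k k := mul_pos hkk hμk
    _ ≤ ∑ i, B i k * L.adjugate i i := single_le_sum (f := fun i => B i k * L.adjugate i i)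
        (fun i _ => mul_nonneg (hcol i) (adjugate_apply_self_nonneg hZ hL i)) (mem_univ k)

theorem stmt_14_general (n : ℕ) [NeZero n] (A : Matrix (Fin n) (Fin n) ℝ)
    (hpos : ∀ i j, 0 ≤ A i j) (hA : CyclicNonIncr A)
    (hrow : ∀ i, 0 < A.mulVec (fun _ => (1 : ℝ)) i)
    (hk : ∃ k : Fin n, ∀ r : Fin n, r ≠ k → A r k < A r r) :
    IsPMatrix A := by
  obtain ⟨k, hk⟩ := hk
  have hdiag : ∀ i, 0 < A i i := fun i => by
    by_contra! hi
    have := sum_nonpos fun j (_ : j ∈ univ) => (hA.le_diag i j).trans hi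
    simp only [mulVec, dotProduct, mul_one] at hrow
    linarith [hrow i]
  intro S hS
  have : NeZero S.card := ⟨card_ne_zero.2 hS⟩
  set f := S.orderEmbOfFin rfl
  have hdet : (A.submatrix (fun i : {a // a ∈ S} => (i : Fin n))
      (fun j : {a // a ∈ S} => (j : Fin n))).det = (A.submatrix f f).det := by
    rw [← det_submatrix_equiv_self (S.orderIsoOfFin rfl).toEquiv]
    rfl
  obtain ⟨k', hk'⟩ := hA.exists_submatrix_pivot hk f.strictMono
  rw [hdet]
  exact (hA.submatrix f.strictMono).det_pos (fun i => hpos _ _) (hdiag _) hk'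

theorem stmt_14 (n : ℕ) [NeZero n] (hn : 1 ≤ n) (A : Matrix (Fin n) (Fin n) ℝ)
    (hpos : ∀ i j, 0 ≤ A i j) (hA : CyclicNonIncr A)
    (hrow : ∀ i, 0 < A.mulVec (fun _ => (1 : ℝ)) i)
    (hk : ∃ k : Fin n, ∀ r : Fin n, r ≠ k → A r k < A r r) :
    IsPMatrix A :=
  stmt_14_general n A hpos hA hrow hk
end

section
/- Let n ≥ 1 and let A be a real n×n matrix satisfying the cyclic non-increasing condition such that Ae > 0 (all row sums strictly positive). Then for every vector z ∈ ℝⁿ with eᵀz < 0 (the sum of the components of z is strictly negative), there exists an index j ∈ {1,…,n} such that (Az)_j < 0. -/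
open Matrix BigOperators

/-!
Subtracting the mean, write `z = w + c • 1` with `∑ w = 0` and `c < 0`; then
`(A *ᵥ z) j = (A *ᵥ w) j + c * (A *ᵥ 1) j`, and the second term is negative for every `j`.
It remains to find `j` with `(A *ᵥ w) j ≤ 0`. Start reading `w` cyclically at the point where
its (periodic) partial sums are maximal: from there every cyclic partial sum of `w` is `≤ 0`
and the full sum is `0`. Row `j` of `A`, read cyclically from the diagonal, is non-increasing,
so Abel summation gives `(A *ᵥ w) j ≤ 0`.
-/

open Finset Fin.NatCast

theorem Finset.sum_range_mul_nonpos_of_antitone {R : Type*} [Ring R] [LinearOrder R]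
    [IsStrictOrderedRing R] {N : ℕ} {b u : ℕ → R}
    (hb : ∀ k, k + 1 < N → b (k + 1) ≤ b k)
    (hu : ∀ k < N, ∑ t ∈ range (k + 1), u t ≤ 0)
    (hN : ∑ t ∈ range N, u t = 0) :
    ∑ t ∈ range N, b t * u t ≤ 0 := by
  have hparts := sum_range_by_parts b u N
  simp only [smul_eq_mul] at hparts
  rw [hparts, hN, mul_zero, zero_sub, neg_nonpos]
  refine sum_nonneg fun k hk => ?_
  rw [mem_range] at hk
  exact mul_nonneg_of_nonpos_of_nonpos (sub_nonpos.mpr (hb k (by omega))) (hu k (by omega))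

theorem Fin.sum_univ_eq_sum_range_add {M : Type*} [AddCommMonoid M] {n : ℕ} [NeZero n]
    (f : Fin n → M) (i : Fin n) :
    ∑ j, f j = ∑ t ∈ range n, f (i + t) := by
  rw [← Equiv.sum_comp (Equiv.addLeft i), ← Fin.sum_univ_eq_sum_range (fun t => f (i + t))]
  simp only [Equiv.coe_addLeft, Fin.cast_val_eq_self]

theorem Fin.exists_forall_sum_range_add_nonpos {M : Type*} [AddCommGroup M] [LinearOrder M]
    [IsOrderedAddMonoid M] {n : ℕ} [NeZero n] {w : Fin n → M} (hw : ∑ j, w j = 0) :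
    ∃ i : Fin n, ∀ k, ∑ t ∈ range k, w (i + t) ≤ 0 := by
  set G : ℕ → M := fun m => ∑ t ∈ range m, w t
  have hG_add (m k : ℕ) : G (m + k) = G m + ∑ t ∈ range k, w (m + t) := by
    simp only [G, sum_range_add, Nat.cast_add]
  have hG_periodic : Function.Periodic G n := fun m => by
    rw [hG_add, ← Fin.sum_univ_eq_sum_range_add, hw, add_zero]
  obtain ⟨m, -, hm⟩ := exists_max_image (range n) G ⟨0, mem_range.mpr (NeZero.pos n)⟩
  refine ⟨m, fun k => ?_⟩
  have hle : G (m + k) ≤ G m := by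
    rw [← hG_periodic.map_mod_nat]
    exact hm _ (mem_range.mpr (Nat.mod_lt _ (NeZero.pos n)))
  rw [hG_add] at hle
  simpa using hle

theorem CyclicNonIncr.apply_add_succ_le {n : ℕ} [NeZero n] {A : Matrix (Fin n) (Fin n) ℝ}
    (hA : CyclicNonIncr A) (i : Fin n) {k : ℕ} (hk : k + 1 < n) :
    A i (i + (k + 1 : ℕ)) ≤ A i (i + k) := by
  have hne : i + ((k + 1 : ℕ) : Fin n) ≠ i := by
    rw [Ne, add_eq_left, Fin.natCast_eq_zero]
    exact Nat.not_dvd_of_pos_of_lt k.succ_pos hk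
  simpa [← add_assoc] using hA i _ hne

theorem CyclicNonIncr.exists_mulVec_nonpos_of_sum_eq_zero {n : ℕ} [NeZero n]
    {A : Matrix (Fin n) (Fin n) ℝ} (hA : CyclicNonIncr A) {w : Fin n → ℝ}
    (hw : ∑ j, w j = 0) :
    ∃ i, (A *ᵥ w) i ≤ 0 := by
  obtain ⟨i, hi⟩ := Fin.exists_forall_sum_range_add_nonpos hw
  refine ⟨i, ?_⟩
  rw [mulVec, dotProduct, Fin.sum_univ_eq_sum_range_add _ i]
  refine sum_range_mul_nonpos_of_antitone (b := fun t => A i (i + t)) (u := fun t => w (i + t))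
    (fun k hk => hA.apply_add_succ_le i hk) (fun k _ => hi (k + 1)) ?_
  rw [← Fin.sum_univ_eq_sum_range_add, hw]

theorem stmt_16_general (n : ℕ) [NeZero n] (A : Matrix (Fin n) (Fin n) ℝ)
    (hA : CyclicNonIncr A)
    (hrow : ∀ i, 0 < A.mulVec (fun _ => (1 : ℝ)) i) :
    ∀ z : Fin n → ℝ, (∑ i, z i) < 0 → ∃ j, A.mulVec z j < 0 := by
  intro z hz
  set c : ℝ := (∑ i, z i) / n
  have hc : c < 0 := div_neg_of_neg_of_pos hz (Nat.cast_pos.mpr (NeZero.pos n))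
  set w : Fin n → ℝ := z - c • fun _ => 1
  have hw : ∑ j, w j = 0 := by
    simp [w, c, sum_sub_distrib, mul_div_cancel₀ _ (NeZero.ne (n : ℝ))]
  obtain ⟨j, hj⟩ := hA.exists_mulVec_nonpos_of_sum_eq_zero hw
  have hz_eq : z = w + c • fun _ => 1 := (sub_add_cancel _ _).symm
  refine ⟨j, ?_⟩
  rw [hz_eq, mulVec_add, mulVec_smul, Pi.add_apply, Pi.smul_apply, smul_eq_mul]
  linarith [mul_neg_of_neg_of_pos hc (hrow j)]

theorem stmt_16 (n : ℕ) [NeZero n] (hn : 1 ≤ n) (A : Matrix (Fin n) (Fin n) ℝ)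
    (hA : CyclicNonIncr A)
    (hrow : ∀ i, 0 < A.mulVec (fun _ => (1 : ℝ)) i) :
    ∀ z : Fin n → ℝ, (∑ i, z i) < 0 → ∃ j, A.mulVec z j < 0 :=
  stmt_16_general n A hA hrow
end

section
/- Let n ≥ 3 and let A = (a_{ij}) be a real n×n matrix such that for every row i: a_{ii} = a_{i[i+1]} > a_{i[i+2]} > … > a_{i[i+n−1]} ≥ 0 (the diagonal entry equals the next entry in cyclic order, after which the row is strictly decreasing, with all entries non-negative). Then A is a P-matrix. -/
/-
Row `i` of `A` is a nonnegative combination `∑ₛ δᵢ(s) 𝟙[i, i + s]` of indicators of cyclic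
windows starting at the diagonal, where `δᵢ(s) = a_{i[i+s]} - a_{i[i+s+1]}` (with `a_{i[i+n]} = 0`)
is positive for `1 ≤ s ≤ n - 2`. By Abel summation `(A x)ᵢ = ∑ₛ δᵢ(s) Wᵢ(s + 1)`, where `Wᵢ(r)` is
the sum of `x` over the window of length `r` starting at `i` (`cyclicRowDrop`, `cyclicWindowSum`).
A maximum principle for window sums shows that no `x ≠ 0` has `(A x)ᵢ = 0` on its support:
normalise to `∑ x ≤ 0` and take a maximal window sum `Wᵢ(r) = μ > 0` with `r` shortest; at the
next point `i + d` of the support every window sum is `≤ 0`, and the one reaching back to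
`i + r - 1` equals `∑ x - μ + Wᵢ(r - 1) < 0`, which the row equation at `i + d` forbids unless that
window has length one; then the support is `{i, i - 1}` and the row equation at `i` fails instead.
Principal submatrices of `A + μ • 1` (`μ ≥ 0`) are therefore nonsingular, and continuity in `μ`
makes the principal minors of `A` positive.
-/

open Matrix BigOperators

open Finset
open Fin.NatCast

namespace Fin

variable {n : ℕ} [NeZero n]

theorem add_natCast_inj (i : Fin n) {a b : ℕ} (ha : a < n) (hb : b < n) :
    i + (a : Fin n) = i + b ↔ a = b := by
  rw [add_right_inj, Fin.ext_iff, val_natCast, val_natCast, Nat.mod_eq_of_lt ha,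
    Nat.mod_eq_of_lt hb]

theorem add_natCast_val_sub (i j : Fin n) : i + ((j - i).val : Fin n) = j := by
  rw [cast_val_eq_self, add_sub_cancel]

theorem val_sub_add_natCast (i j : Fin n) {d : ℕ} (hd : d < n) :
    (j - (i + d)).val = (n - d + (j - i).val) % n := by
  rw [show j - (i + d) = j - i - d by abel, sub_def, val_natCast, Nat.mod_eq_of_lt hd]

theorem add_natCast_ne_self (i : Fin n) {t : ℕ} (ht : t < n) (ht₀ : t ≠ 0) :
    i + (t : Fin n) ≠ i := fun h =>
  ht₀ ((add_natCast_inj i ht (Nat.pos_of_neZero n)).mp (by rw [h, Nat.cast_zero, add_zero]))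

end Fin

section CyclicWindowSum

variable {n : ℕ}

def cyclicWindowSum (x : Fin n → ℝ) (i : Fin n) (r : ℕ) : ℝ :=
  ∑ j, if (j - i).val < r then x j else 0

theorem cyclicWindowSum_zero (x : Fin n → ℝ) (i : Fin n) : cyclicWindowSum x i 0 = 0 := by
  simp [cyclicWindowSum]

theorem cyclicWindowSum_of_le (x : Fin n → ℝ) (i : Fin n) {r : ℕ} (hr : n ≤ r) :
    cyclicWindowSum x i r = ∑ j, x j :=
  sum_congr rfl fun j _ => if_pos ((j - i).isLt.trans_le hr)

theorem cyclicWindowSum_succ [NeZero n] (x : Fin n → ℝ) (i : Fin n) {r : ℕ} (hr : r < n) :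
    cyclicWindowSum x i (r + 1) = cyclicWindowSum x i r + x (i + r) := by
  rw [cyclicWindowSum, cyclicWindowSum, ← Fintype.sum_ite_eq' (i + (r : Fin n)) x,
    ← sum_add_distrib]
  refine sum_congr rfl fun j _ => ?_
  have hval : (j - i).val = r ↔ j = i + r := by
    rw [← Fin.add_natCast_inj i (j - i).isLt hr, Fin.add_natCast_val_sub]
  by_cases hj : j = i + r
  · have : (j - i).val = r := hval.mpr hj
    rw [if_pos (by omega), if_neg (by omega), if_pos hj, zero_add]
  · have : (j - i).val ≠ r := fun h => hj (hval.mp h)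
    rw [if_neg hj, add_zero]
    split_ifs <;> first | rfl | (exfalso; omega)

theorem cyclicWindowSum_one [NeZero n] (x : Fin n → ℝ) (i : Fin n) :
    cyclicWindowSum x i 1 = x i := by
  rw [cyclicWindowSum_succ x i (Nat.pos_of_neZero n), cyclicWindowSum_zero]; simp

theorem cyclicWindowSum_two [NeZero n] (x : Fin n → ℝ) (i : Fin n) (hn : 2 < n) :
    cyclicWindowSum x i 2 = x i + x (i + 1) := by
  rw [cyclicWindowSum_succ x i (by omega), cyclicWindowSum_one, Nat.cast_one]

theorem cyclicWindowSum_neg (x : Fin n → ℝ) (i : Fin n) (r : ℕ) :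
    cyclicWindowSum (-x) i r = -cyclicWindowSum x i r := by
  rw [cyclicWindowSum, cyclicWindowSum, ← sum_neg_distrib]
  refine sum_congr rfl fun j _ => ?_
  split_ifs <;> simp

theorem cyclicWindowSum_eq_of_forall_eq_zero [NeZero n] (x : Fin n → ℝ) (i : Fin n) {r s : ℕ}
    (h : ∀ t, r ≤ t → t < s → x (i + t) = 0) (hrs : r ≤ s) (hs : s ≤ n) :
    cyclicWindowSum x i s = cyclicWindowSum x i r := by
  induction s, hrs using Nat.le_induction with
  | base => rfl
  | succ s hrs ih =>
    rw [cyclicWindowSum_succ x i (by omega), h s hrs (by omega), add_zero,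
      ih (fun t ht hts => h t ht (by omega)) (by omega)]

/-- The last term is the part of the window that wraps around past `i`; it vanishes (truncated
subtraction) when `d + s ≤ n`. -/
theorem cyclicWindowSum_add_natCast [NeZero n] (x : Fin n → ℝ) (i : Fin n) {d s : ℕ} (hd : d < n)
    (hs : s ≤ n) : cyclicWindowSum x (i + d) s =
      cyclicWindowSum x i (d + s) - cyclicWindowSum x i d + cyclicWindowSum x i (d + s - n) := by
  simp only [cyclicWindowSum, ← sum_sub_distrib, ← sum_add_distrib]
  refine sum_congr rfl fun j _ => ?_
  rw [Fin.val_sub_add_natCast i j hd]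
  obtain ⟨v, hv⟩ : ∃ v, v = (j - i).val := ⟨_, rfl⟩
  have hvn : v < n := hv ▸ (j - i).isLt
  rw [← hv]
  by_cases hvd : v < d
  · rw [Nat.mod_eq_of_lt (by omega)]
    split_ifs <;> first | ring1 | (exfalso; omega)
  · rw [show n - d + v = v - d + n by omega, Nat.add_mod_right, Nat.mod_eq_of_lt (by omega)]
    split_ifs <;> first | ring1 | (exfalso; omega)

theorem exists_cyclicWindowSum_isMax_of_pos [NeZero n] (x : Fin n → ℝ)
    (h : ∃ i r, 0 < cyclicWindowSum x i r) : ∃ i r,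
      (∀ i' r', cyclicWindowSum x i' r' ≤ cyclicWindowSum x i r) ∧
        cyclicWindowSum x i (r - 1) < cyclicWindowSum x i r := by
  classical
  obtain ⟨⟨i, r⟩, -, hmax⟩ := (univ ×ˢ range (n + 1)).exists_max_image
    (fun p => cyclicWindowSum x p.1 p.2) ⟨(0, 0), by simp⟩
  have hglobal : ∀ i' r', cyclicWindowSum x i' r' ≤ cyclicWindowSum x i r := by
    intro i' r'
    rcases le_or_gt r' n with hr' | hr'
    · exact hmax (i', r') (by simp [Nat.lt_succ_of_le hr'])
    · rw [cyclicWindowSum_of_le x i' hr'.le, ← cyclicWindowSum_of_le x i' le_rfl]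
      exact hmax (i', n) (by simp)
  have hpos : 0 < cyclicWindowSum x i r := by
    obtain ⟨i', r', h'⟩ := h
    exact h'.trans_le (hglobal i' r')
  -- the shortest window at `i` attaining the maximum
  have hex : ∃ r', cyclicWindowSum x i r' = cyclicWindowSum x i r := ⟨r, rfl⟩
  have hfind := Nat.find_spec hex
  refine ⟨i, Nat.find hex, ?_, ?_⟩ <;> rw [hfind]
  · exact hglobal
  refine (hglobal i _).lt_of_ne fun heq => ?_
  rcases Nat.eq_zero_or_pos (Nat.find hex) with h0 | h0
  · rw [h0, cyclicWindowSum_zero] at hfind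
    exact hpos.ne hfind
  · exact Nat.find_min hex (Nat.sub_lt h0 one_pos) heq

theorem exists_cyclicWindowSum_eq_of_ne_sum [NeZero n] (x : Fin n → ℝ) (i : Fin n) {r : ℕ}
    (hr : cyclicWindowSum x i r ≠ ∑ j, x j) : ∃ d, r ≤ d ∧ d < n ∧ x (i + d) ≠ 0 ∧
      ∀ s, r ≤ s → s ≤ d → cyclicWindowSum x i s = cyclicWindowSum x i r := by
  classical
  have hrn : r < n := by
    by_contra! h
    exact hr (cyclicWindowSum_of_le x i h)
  have hex : ∃ d, r ≤ d ∧ d < n ∧ x (i + d) ≠ 0 := by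
    by_contra! h
    have hflat := cyclicWindowSum_eq_of_forall_eq_zero x i h hrn.le le_rfl
    rw [cyclicWindowSum_of_le x i le_rfl] at hflat
    exact hr hflat.symm
  obtain ⟨hrd, hdn, hxd⟩ := Nat.find_spec hex
  refine ⟨Nat.find hex, hrd, hdn, hxd, fun s hrs hsd =>
    cyclicWindowSum_eq_of_forall_eq_zero x i (fun t hrt hts => ?_) hrs (by omega)⟩
  by_contra hxt
  exact Nat.find_min hex (by omega : t < Nat.find hex) ⟨hrt, by omega, hxt⟩

theorem cyclicWindowSum_add_natCast_nonpos [NeZero n] (x : Fin n → ℝ) (i : Fin n) {d : ℕ}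
    (hd : d < n) (hsum : ∑ j, x j ≤ 0) (hmax : ∀ i' r', cyclicWindowSum x i' r' ≤ cyclicWindowSum x i d)
    (s : ℕ) : cyclicWindowSum x (i + d) s ≤ 0 := by
  rcases le_or_gt s n with hs | hs
  · rw [cyclicWindowSum_add_natCast x i hd hs]
    rcases le_or_gt (d + s) n with hds | hds
    · rw [Nat.sub_eq_zero_of_le hds, cyclicWindowSum_zero]
      linarith [hmax i (d + s)]
    · rw [cyclicWindowSum_of_le x i hds.le]
      linarith [hmax i (d + s - n)]
  · rw [cyclicWindowSum_of_le _ _ hs.le]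
    exact hsum

end CyclicWindowSum

theorem Matrix.det_pos_of_det_add_smul_one_ne_zero {ι : Type*} [Fintype ι] [DecidableEq ι]
    (B : Matrix ι ι ℝ) (h : ∀ μ : ℝ, 0 ≤ μ → (B + μ • 1).det ≠ 0) : 0 < B.det := by
  have hcont : Continuous fun μ : ℝ => (B + μ • 1).det :=
    (continuous_const.add (continuous_id.smul continuous_const)).matrix_det
  have hnear : ∀ᶠ ε in nhds (0 : ℝ), 0 < (1 + ε • B).det :=
    continuousAt_const.eventually_lt
      (continuous_const.add (continuous_id.smul continuous_const)).matrix_det.continuousAt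
      (by simp)
  obtain ⟨ε, hdet, hε⟩ := ((hnear.filter_mono nhdsWithin_le_nhds).and
    (self_mem_nhdsWithin : ∀ᶠ ε in nhdsWithin (0 : ℝ) (Set.Ioi 0), 0 < ε)).exists
  have hlarge : 0 < (B + ε⁻¹ • 1).det := by
    rw [show B + ε⁻¹ • 1 = ε⁻¹ • (1 + ε • B) by
      rw [smul_add, smul_smul, inv_mul_cancel₀ (ne_of_gt hε), one_smul, add_comm], det_smul]
    exact mul_pos (pow_pos (inv_pos.mpr hε) _) hdet
  by_contra! hnonpos
  obtain ⟨μ, hμ, hzero⟩ := intermediate_value_Icc (inv_pos.mpr hε).le hcont.continuousOn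
    ⟨by simpa using hnonpos, hlarge.le⟩
  exact h μ hμ.1 hzero

namespace Matrix

variable {n : ℕ} [NeZero n]

/-- Row `i` of `A` read cyclically from the diagonal, `a_{i i}, a_{i [i+1]}, …, a_{i [i+n-1]}`,
followed by zeros. -/
def cyclicRow (A : Matrix (Fin n) (Fin n) ℝ) (i : Fin n) (t : ℕ) : ℝ :=
  if t < n then A i (i + t) else 0

def cyclicRowDrop (A : Matrix (Fin n) (Fin n) ℝ) (i : Fin n) (s : ℕ) : ℝ :=
  A.cyclicRow i s - A.cyclicRow i (s + 1)

theorem cyclicRow_val_sub (A : Matrix (Fin n) (Fin n) ℝ) (i j : Fin n) :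
    A.cyclicRow i (j - i).val = A i j := by
  rw [cyclicRow, if_pos (j - i).isLt, Fin.add_natCast_val_sub]

theorem cyclicRow_eq_sum_cyclicRowDrop (A : Matrix (Fin n) (Fin n) ℝ) (i : Fin n) (t : ℕ) :
    A.cyclicRow i t = ∑ s ∈ Ico t n, A.cyclicRowDrop i s := by
  rcases le_or_gt t n with ht | ht
  · have hzero : A.cyclicRow i n = 0 := if_neg (lt_irrefl n)
    rw [← neg_neg (∑ s ∈ Ico t n, _), ← sum_neg_distrib]
    simp only [cyclicRowDrop, neg_sub]
    rw [sum_Ico_sub _ ht, hzero, zero_sub, neg_neg]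
  · rw [cyclicRow, if_neg (by omega), Ico_eq_empty_of_le ht.le, sum_empty]

theorem cyclicRowDrop_add_smul_one (A : Matrix (Fin n) (Fin n) ℝ) (μ : ℝ) (i : Fin n) (s : ℕ) :
    (A + μ • 1).cyclicRowDrop i s = A.cyclicRowDrop i s + if s = 0 then μ else 0 := by
  have hrow : ∀ t, (A + μ • 1).cyclicRow i t = A.cyclicRow i t + if t = 0 then μ else 0 := by
    intro t
    unfold cyclicRow
    split_ifs with ht ht₀ ht₀
    · subst ht₀
      simp
    · rw [add_apply, smul_apply, one_apply_ne (Fin.add_natCast_ne_self i ht ht₀).symm, smul_zero]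
    · exact absurd (ht₀ ▸ Nat.pos_of_neZero n) ht
    · rw [add_zero]
  rw [cyclicRowDrop, cyclicRowDrop, hrow, hrow, if_neg s.succ_ne_zero]
  ring

/-- Abel summation of a row against the cyclic windows starting on the diagonal. -/
theorem mulVec_apply_eq_sum_cyclicRowDrop_mul (A : Matrix (Fin n) (Fin n) ℝ)
    (x : Fin n → ℝ) (i : Fin n) :
    (A *ᵥ x) i = ∑ s ∈ range n, A.cyclicRowDrop i s * cyclicWindowSum x i (s + 1) := by
  have hentry : ∀ j, A i j = ∑ s ∈ range n, if (j - i).val ≤ s then A.cyclicRowDrop i s else 0 := by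
    intro j
    rw [← A.cyclicRow_val_sub i j, cyclicRow_eq_sum_cyclicRowDrop, ← sum_filter]
    congr 1
    ext s
    simp only [mem_Ico, mem_filter, mem_range]
    omega
  simp only [mulVec, dotProduct, hentry, sum_mul, cyclicWindowSum, mul_sum]
  rw [sum_comm]
  refine sum_congr rfl fun s _ => sum_congr rfl fun j _ => ?_
  split_ifs <;> first | ring1 | (exfalso; omega)

/-- Each row of `A`, read cyclically from the diagonal and followed by a zero, is antitone, and
strictly antitone from the entry after the diagonal to the last entry. -/
structure RowsCyclicallyDecreasing (A : Matrix (Fin n) (Fin n) ℝ) : Prop where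
  drop_nonneg : ∀ i s, 0 ≤ A.cyclicRowDrop i s
  drop_pos : ∀ i s, 1 ≤ s → s + 2 ≤ n → 0 < A.cyclicRowDrop i s

namespace RowsCyclicallyDecreasing

variable {A : Matrix (Fin n) (Fin n) ℝ} {x : Fin n → ℝ}

theorem cyclicWindowSum_eq_zero (hA : A.RowsCyclicallyDecreasing) {i : Fin n}
    (hrow : (A *ᵥ x) i = 0) (hW : ∀ r, cyclicWindowSum x i r ≤ 0) {r : ℕ} (hr : 2 ≤ r)
    (hrn : r < n) : cyclicWindowSum x i r = 0 := by
  rw [mulVec_apply_eq_sum_cyclicRowDrop_mul] at hrow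
  have hterm := (sum_eq_zero_iff_of_nonpos fun s _ =>
    mul_nonpos_of_nonneg_of_nonpos (hA.drop_nonneg i s) (hW (s + 1))).mp hrow (r - 1)
    (mem_range.mpr (by omega))
  rw [Nat.sub_add_cancel (by omega)] at hterm
  exact (mul_eq_zero.mp hterm).resolve_left (hA.drop_pos i (r - 1) (by omega) (by omega)).ne'

theorem cyclicWindowSum_eq_zero_of_nonneg (hA : A.RowsCyclicallyDecreasing) {i : Fin n}
    (hrow : (A *ᵥ x) i = 0) (hW : ∀ r, 0 ≤ cyclicWindowSum x i r) {r : ℕ} (hr : 2 ≤ r)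
    (hrn : r < n) : cyclicWindowSum x i r = 0 := by
  have h := hA.cyclicWindowSum_eq_zero (x := -x) (by rw [mulVec_neg, Pi.neg_apply, hrow, neg_zero])
    (fun s => by rw [cyclicWindowSum_neg, neg_nonpos]; exact hW s) hr hrn
  rwa [cyclicWindowSum_neg, neg_eq_zero] at h

theorem eq_zero_of_forall_cyclicWindowSum_nonpos (hA : A.RowsCyclicallyDecreasing) (hn : 3 ≤ n)
    (hrow : ∀ i, x i ≠ 0 → (A *ᵥ x) i = 0) (hW : ∀ i r, cyclicWindowSum x i r ≤ 0) :
    x = 0 := by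
  funext j
  by_contra hj
  have hpair := hA.cyclicWindowSum_eq_zero (hrow j hj) (hW j) le_rfl (by omega : 2 < n)
  rw [cyclicWindowSum_two x j (by omega)] at hpair
  have hj₀ := hW j 1
  have hj₁ := hW (j + 1) 1
  rw [cyclicWindowSum_one] at hj₀ hj₁
  exact hj (by rw [Pi.zero_apply]; linarith)

theorem forall_cyclicWindowSum_nonpos (hA : A.RowsCyclicallyDecreasing) (hn : 3 ≤ n)
    (hrow : ∀ i, x i ≠ 0 → (A *ᵥ x) i = 0) (hsum : ∑ j, x j ≤ 0) :
    ∀ i r, cyclicWindowSum x i r ≤ 0 := by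
  by_contra! hpos
  obtain ⟨i, r, hmax, hprev⟩ := exists_cyclicWindowSum_isMax_of_pos x hpos
  obtain ⟨i₀, r₀, hpos₀⟩ := hpos
  have hμ : 0 < cyclicWindowSum x i r := hpos₀.trans_le (hmax i₀ r₀)
  have hr : 1 ≤ r := by
    by_contra! h
    rw [Nat.lt_one_iff.mp h] at hprev
    exact lt_irrefl _ hprev
  obtain ⟨d, hrd, hdn, hxd, hflat⟩ :=
    exists_cyclicWindowSum_eq_of_ne_sum x i (by linarith : cyclicWindowSum x i r ≠ ∑ j, x j)
  have hWd : cyclicWindowSum x i d = cyclicWindowSum x i r := hflat d hrd le_rfl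
  have hnext := cyclicWindowSum_add_natCast_nonpos x i hdn hsum (hWd ▸ hmax)
  have hzero : ∀ s, 2 ≤ s → s < n → cyclicWindowSum x (i + d) s = 0 :=
    fun s => hA.cyclicWindowSum_eq_zero (hrow _ hxd) hnext
  by_cases hcorner : d = n - 1 ∧ r = 1
  · -- `x` lives on `{i, i - 1}`: the row at `i - 1` forces `∑ x = 0`, so all window sums at `i`
    -- are `≥ 0` with `Wᵢ(2) = μ > 0`, against the row at `i`
    obtain ⟨rfl, rfl⟩ := hcorner
    have hsum_eq : ∑ j, x j = 0 := by
      have h2 := hzero 2 le_rfl (by omega)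
      rw [cyclicWindowSum_add_natCast x i hdn (by omega), cyclicWindowSum_of_le x i (by omega),
        hWd, show n - 1 + 2 - n = 1 by omega] at h2
      linarith
    have hW₂ := hA.cyclicWindowSum_eq_zero_of_nonneg (hrow i (cyclicWindowSum_one x i ▸ hμ.ne'))
      (fun s => by
        rcases Nat.eq_zero_or_pos s with rfl | hs
        · rw [cyclicWindowSum_zero]
        rcases le_or_gt s (n - 1) with hsn | hsn
        · rw [hflat s hs hsn]; exact hμ.le
        · rw [cyclicWindowSum_of_le x i (by omega), hsum_eq])
      le_rfl (by omega : 2 < n)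
    rw [hflat 2 (by omega) (by omega)] at hW₂
    exact hμ.ne' hW₂
  · have hs₀ := hzero (n - d + r - 1) (by omega) (by omega)
    rw [cyclicWindowSum_add_natCast x i hdn (by omega), cyclicWindowSum_of_le x i (by omega),
      hWd, show d + (n - d + r - 1) - n = r - 1 by omega] at hs₀
    linarith

theorem eq_zero_of_mulVec_apply_eq_zero (hA : A.RowsCyclicallyDecreasing) (hn : 3 ≤ n)
    (hrow : ∀ i, x i ≠ 0 → (A *ᵥ x) i = 0) : x = 0 := by
  have key : ∀ y : Fin n → ℝ, (∀ i, y i ≠ 0 → (A *ᵥ y) i = 0) → ∑ j, y j ≤ 0 → y = 0 :=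
    fun y hy hsum => hA.eq_zero_of_forall_cyclicWindowSum_nonpos hn hy
      (hA.forall_cyclicWindowSum_nonpos hn hy hsum)
  rcases le_total (∑ j, x j) 0 with hsum | hsum
  · exact key x hrow hsum
  · refine neg_eq_zero.mp (key (-x) (fun i hi => ?_) ?_)
    · rw [mulVec_neg, Pi.neg_apply, hrow i (by simpa using hi), neg_zero]
    · simpa using hsum

theorem det_submatrix_ne_zero (hA : A.RowsCyclicallyDecreasing) (hn : 3 ≤ n)
    (S : Finset (Fin n)) : (A.submatrix ((↑) : S → Fin n) (↑)).det ≠ 0 := by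
  classical
  intro hdet
  obtain ⟨v, hv, hBv⟩ := exists_mulVec_eq_zero_iff.mpr hdet
  let x : Fin n → ℝ := fun j => if hj : j ∈ S then v ⟨j, hj⟩ else 0
  have hx : ∀ j : S, x j = v j := fun j => dif_pos j.2
  have hrow : ∀ i, x i ≠ 0 → (A *ᵥ x) i = 0 := by
    intro i hi
    have hiS : i ∈ S := by
      by_contra h
      exact hi (dif_neg h)
    have hsum : (A *ᵥ x) i = (A.submatrix ((↑) : S → Fin n) (↑) *ᵥ v) ⟨i, hiS⟩ := by
      simp only [mulVec, dotProduct, submatrix_apply]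
      rw [← sum_subset (subset_univ S) fun j _ hj => by rw [show x j = 0 from dif_neg hj, mul_zero],
        ← sum_coe_sort S]
      exact sum_congr rfl fun j _ => by rw [hx j]
    rw [hsum, hBv, Pi.zero_apply]
  apply hv
  funext j
  rw [← hx j, hA.eq_zero_of_mulVec_apply_eq_zero hn hrow, Pi.zero_apply, Pi.zero_apply]

theorem add_smul_one (hA : A.RowsCyclicallyDecreasing) {μ : ℝ} (hμ : 0 ≤ μ) :
    (A + μ • 1).RowsCyclicallyDecreasing where
  drop_nonneg i s := by
    rw [cyclicRowDrop_add_smul_one]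
    have := hA.drop_nonneg i s
    split_ifs <;> linarith
  drop_pos i s hs hsn := by
    rw [cyclicRowDrop_add_smul_one, if_neg (by omega), add_zero]
    exact hA.drop_pos i s hs hsn

theorem isPMatrix (hA : A.RowsCyclicallyDecreasing) (hn : 3 ≤ n) : IsPMatrix A := by
  intro S _
  refine det_pos_of_det_add_smul_one_ne_zero _ fun μ hμ => ?_
  have hsub : (A + μ • 1).submatrix ((↑) : S → Fin n) ((↑) : S → Fin n) =
      A.submatrix ((↑) : S → Fin n) ((↑) : S → Fin n) + μ • 1 := by
    rw [submatrix_add, submatrix_smul, Pi.add_apply, Pi.add_apply, Pi.smul_apply,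
      Pi.smul_apply, submatrix_one _ Subtype.val_injective]
  exact hsub ▸ (hA.add_smul_one hμ).det_submatrix_ne_zero hn S

theorem of_entries (hdiag : ∀ i : Fin n, A i (i + 1) ≤ A i i)
    (hstrict : ∀ i j : Fin n, j ≠ i → j ≠ i + 1 → A i j < A i (j - 1))
    (hnonneg : ∀ i j, 0 ≤ A i j) : A.RowsCyclicallyDecreasing := by
  have hpos : ∀ i s, 1 ≤ s → s + 2 ≤ n → 0 < A.cyclicRowDrop i s := by
    intro i s hs hsn
    have hne : i + ((s + 1 : ℕ) : Fin n) ≠ i + ((1 : ℕ) : Fin n) :=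
      (Fin.add_natCast_inj i (by omega) (by omega)).not.mpr (by omega)
    rw [Nat.cast_one] at hne
    have h := hstrict i _ (Fin.add_natCast_ne_self i (by omega) (by omega)) hne
    rw [show i + ((s + 1 : ℕ) : Fin n) - 1 = i + s by push_cast; abel] at h
    rw [cyclicRowDrop, cyclicRow, cyclicRow, if_pos (by omega), if_pos (by omega), sub_pos]
    exact h
  refine ⟨fun i s => ?_, hpos⟩
  by_cases hs : s + 1 < n
  · rcases Nat.eq_zero_or_pos s with rfl | hs₀
    · simp [cyclicRowDrop, cyclicRow, hs, Nat.pos_of_neZero n, hdiag]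
    · exact (hpos i s hs₀ (by omega)).le
  · rw [cyclicRowDrop, cyclicRow, cyclicRow, if_neg hs, sub_zero]
    split_ifs
    · exact hnonneg _ _
    · exact le_rfl

end RowsCyclicallyDecreasing

end Matrix

theorem stmt_19 (n : ℕ) [NeZero n] (hn : 3 ≤ n) (A : Matrix (Fin n) (Fin n) ℝ)
    (hdiag : ∀ i : Fin n, A i i = A i (i + 1))
    (hstrict : ∀ i j : Fin n, j ≠ i → j ≠ i + 1 → A i (j - 1) > A i j)
    (hpos : ∀ i j, 0 ≤ A i j) :
    IsPMatrix A :=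
  (Matrix.RowsCyclicallyDecreasing.of_entries (fun i => (hdiag i).ge) hstrict hpos).isPMatrix hn
end
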